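/- Let τ1, τ2 ∈ (0,1], u1 ∈ [0,τ1], u2 = τ2(1 − u1/τ1), and define x1 by x1² = u1²(1−u2²)/(1−u1²u2²). Then x1 is a strictly increasing function of u1 on [0, τ1], with x1(0) = 0 and x1(τ1) = τ1. -/
import Mathlib

private lemma weighted_clasp_aux (a b w v : ℝ) (ha0 : 0 ≤ a) (hab : a < b)
    (hb1 : b ≤ 1) (hv0 : 0 ≤ v) (hvw : v ≤ w) (hw1 : w ≤ 1)
    (hwa : 0 < a → w < 1) (hv1 : v < 1) :
    Real.sqrt (a ^ 2 * (1 - w ^ 2) / (1 - a ^ 2 * w ^ 2)) <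
      Real.sqrt (b ^ 2 * (1 - v ^ 2) / (1 - b ^ 2 * v ^ 2)) := by
  have hb0 : 0 < b := lt_of_le_of_lt ha0 hab
  have hw0 : 0 ≤ w := hv0.trans hvw
  have ha1 : a ≤ 1 := le_of_lt (lt_of_lt_of_le hab hb1)
  have hb2 : b ^ 2 ≤ 1 := by nlinarith
  have ha2 : a ^ 2 ≤ 1 := by nlinarith
  have hv2 : v ^ 2 < 1 := by nlinarith
  have hw2 : w ^ 2 ≤ 1 := by nlinarith
  have hDb : 0 < 1 - b ^ 2 * v ^ 2 := by
    have h1 : b ^ 2 * v ^ 2 ≤ v ^ 2 := mul_le_of_le_one_left (sq_nonneg v) hb2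
    linarith
  have hDa : 0 < 1 - a ^ 2 * w ^ 2 := by
    rcases eq_or_lt_of_le ha0 with h | h
    · rw [← h]; norm_num
    · have hw1' : w ^ 2 < 1 := by nlinarith [hwa h]
      have h1 : a ^ 2 * w ^ 2 ≤ w ^ 2 := mul_le_of_le_one_left (sq_nonneg w) ha2
      linarith
  have key : (1 - b ^ 2) * (1 - a ^ 2 * w ^ 2) < (1 - a ^ 2) * (1 - b ^ 2 * v ^ 2) := by
    rcases eq_or_lt_of_le ha0 with h | h
    · rw [← h]
      nlinarith [mul_pos (pow_pos hb0 2) (show (0:ℝ) < 1 - v ^ 2 by linarith)]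
    · have hw1' : w < 1 := hwa h
      have t1 : 0 < (b ^ 2 - a ^ 2) * (1 - w ^ 2) := by
        apply mul_pos (by nlinarith) (by nlinarith)
      have t2 : 0 ≤ b ^ 2 * (1 - a ^ 2) * (w ^ 2 - v ^ 2) := by
        apply mul_nonneg (mul_nonneg (sq_nonneg b) (by linarith)) (by nlinarith)
      nlinarith [t1, t2]
  apply Real.sqrt_lt_sqrt
  · exact div_nonneg (mul_nonneg (sq_nonneg a) (by linarith)) hDa.le
  · rw [div_lt_div_iff₀ hDa hDb]
    nlinarith [key]

/-- Shape of the weighted clasp curve: with `u2 = τ2(1 − u1/τ1)` and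
`x1 = sqrt(u1²(1−u2²)/(1−u1²u2²))`, the horizontal coordinate `x1` is a
strictly increasing function of `u1` on `[0, τ1]` with `x1(0) = 0` and
`x1(τ1) = τ1`. -/
theorem weighted_clasp_x_strict_mono
    (τ1 τ2 : ℝ) (hτ1 : τ1 ∈ Set.Ioc (0:ℝ) 1) (hτ2 : τ2 ∈ Set.Ioc (0:ℝ) 1) :
    StrictMonoOn
      (fun u1 : ℝ =>
        Real.sqrt (u1 ^ 2 * (1 - (τ2 * (1 - u1 / τ1)) ^ 2) /
          (1 - u1 ^ 2 * (τ2 * (1 - u1 / τ1)) ^ 2)))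
      (Set.Icc 0 τ1) ∧
    Real.sqrt ((0:ℝ) ^ 2 * (1 - (τ2 * (1 - 0 / τ1)) ^ 2) /
          (1 - (0:ℝ) ^ 2 * (τ2 * (1 - 0 / τ1)) ^ 2)) = 0 ∧
    Real.sqrt (τ1 ^ 2 * (1 - (τ2 * (1 - τ1 / τ1)) ^ 2) /
          (1 - τ1 ^ 2 * (τ2 * (1 - τ1 / τ1)) ^ 2)) = τ1 := by
  obtain ⟨ht1, ht1'⟩ := hτ1
  obtain ⟨ht2, ht2'⟩ := hτ2
  have hτ1ne : τ1 ≠ 0 := ht1.ne'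
  refine ⟨?_, by norm_num, ?_⟩
  · intro a ha b hb hab
    obtain ⟨ha0, haτ⟩ := ha
    obtain ⟨hb0, hbτ⟩ := hb
    simp only
    have hb0' : 0 < b := lt_of_le_of_lt ha0 hab
    have hbt : b / τ1 ≤ 1 := (div_le_one ht1).2 hbτ
    have hat : a / τ1 ≤ 1 := (div_le_one ht1).2 haτ
    have hat0 : 0 ≤ a / τ1 := div_nonneg ha0 ht1.le
    have hbt0 : 0 < b / τ1 := div_pos hb0' ht1
    apply weighted_clasp_aux a b _ _ ha0 hab (hbτ.trans ht1')
    · exact mul_nonneg ht2.le (by linarith)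
    · have hab' : a / τ1 ≤ b / τ1 := by gcongr
      exact mul_le_mul_of_nonneg_left (by linarith) ht2.le
    · calc τ2 * (1 - a / τ1) ≤ 1 * 1 := by
            apply mul_le_mul ht2' (by linarith) (by linarith) zero_le_one
         _ = 1 := by norm_num
    · intro haa
      have h1 : 0 < a / τ1 := div_pos haa ht1
      calc τ2 * (1 - a / τ1) ≤ 1 * (1 - a / τ1) :=
            mul_le_mul_of_nonneg_right ht2' (by linarith)
        _ < 1 := by linarith
    · calc τ2 * (1 - b / τ1) ≤ 1 * (1 - b / τ1) :=
            mul_le_mul_of_nonneg_right ht2' (by linarith)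
        _ < 1 := by linarith
  · rw [div_self hτ1ne]
    norm_num [Real.sqrt_sq ht1.le]
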